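/- Let (f_i)_{i∈I} be an ℓ²-frame for a real Banach space X with bounds 0 < A ≤ B, let S : X → X' be the frame operator, and assume S is bijective with bounded inverse S⁻¹ : X' → X. Then the canonical dual frame (S⁻¹f_i)_{i∈I} ⊂ X satisfies the frame inequalities for X': (1/B)‖u'‖² ≤ Σ_{i∈I} |u'(S⁻¹f_i)|² ≤ (1/A)‖u'‖² for every u' ∈ X', where ‖u'‖ denotes the dual norm on X'. -/

import Mathlib

/-! With `v := S⁻¹ u'`, the symmetry of the bilinear form `(v, w) ↦ S v w = ∑ f_i(v) f_i(w)`
gives `u'(S⁻¹ f_i) = S v (S⁻¹ f_i) = f_i(v)`, so the sum to be estimated is `S v v = u'(v)`.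
Cauchy–Schwarz for the positive form `S` together with the upper frame bound yields
`‖S v‖² ≤ B · S v v`, while the lower frame bound and `S v v ≤ ‖S v‖ ‖v‖` yield
`A · S v v ≤ ‖S v‖²`. -/

section

variable {X : Type*} [NormedAddCommGroup X] [NormedSpace ℝ X]

section FrameOperator

variable {I : Type*} {f : I → StrongDual ℝ X} {S : X →L[ℝ] StrongDual ℝ X}

theorem hasSum_frameOperator_apply (hS : ∀ v, HasSum (fun i => f i v • f i) (S v)) (v w : X) :
    HasSum (fun i => f i v * f i w) (S v w) := by
  simpa using (hS v).mapL (ContinuousLinearMap.apply ℝ ℝ w)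

theorem frameOperator_apply_comm (hS : ∀ v, HasSum (fun i => f i v • f i) (S v)) (v w : X) :
    S v w = S w v := by
  have hvw := hasSum_frameOperator_apply hS v w
  simp only [mul_comm (f _ v)] at hvw
  exact hvw.unique (hasSum_frameOperator_apply hS w v)

theorem hasSum_sq_frameOperator_apply_self (hS : ∀ v, HasSum (fun i => f i v • f i) (S v))
    (v : X) : HasSum (fun i => f i v ^ 2) (S v v) := by
  simpa only [sq] using hasSum_frameOperator_apply hS v v

end FrameOperator

section PositiveForm

variable {T : X →L[ℝ] StrongDual ℝ X}

theorem sq_norm_le_mul_apply_self (hsymm : ∀ v w, T v w = T w v) (hpos : ∀ v, 0 ≤ T v v)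
    {B : ℝ} (hB : 0 ≤ B) (hup : ∀ v, T v v ≤ B * ‖v‖ ^ 2) (v : X) :
    ‖T v‖ ^ 2 ≤ B * T v v := by
  have hBv : 0 ≤ B * T v v := mul_nonneg hB (hpos v)
  have hcs : ∀ w, T v w ^ 2 ≤ B * T v v * ‖w‖ ^ 2 := fun w =>
    calc T v w ^ 2 = T v w * T w v := by rw [sq, hsymm w v]
      _ ≤ T v v * T w w :=
        LinearMap.BilinForm.apply_mul_apply_le_of_forall_zero_le T.toLinearMap₁₂ hpos v w
      _ ≤ T v v * (B * ‖w‖ ^ 2) := mul_le_mul_of_nonneg_left (hup w) (hpos v)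
      _ = B * T v v * ‖w‖ ^ 2 := by ring
  have hnorm : ‖T v‖ ≤ √(B * T v v) := by
    refine (T v).opNorm_le_bound (Real.sqrt_nonneg _) fun w => ?_
    rw [Real.norm_eq_abs, ← Real.sqrt_sq (norm_nonneg w), ← Real.sqrt_mul hBv]
    exact Real.abs_le_sqrt (hcs w)
  exact (Real.le_sqrt (norm_nonneg _) hBv).mp hnorm

theorem mul_apply_self_le_sq_norm {A : ℝ} (hA : 0 ≤ A) (hlow : ∀ v, A * ‖v‖ ^ 2 ≤ T v v)
    (v : X) : A * T v v ≤ ‖T v‖ ^ 2 := by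
  have hle : T v v ≤ ‖T v‖ * ‖v‖ := (le_abs_self _).trans ((T v).le_opNorm v)
  nlinarith [hlow v, norm_nonneg v, norm_nonneg (T v), sq_nonneg (‖T v‖ - A * ‖v‖)]

end PositiveForm

end

theorem stmt3_general {X : Type*} [NormedAddCommGroup X] [NormedSpace ℝ X]
    {I : Type*} (f : I → StrongDual ℝ X) (A B : ℝ)
    (hA : 0 < A) (hAB : A ≤ B)
    (hlow : ∀ v : X, A * ‖v‖ ^ 2 ≤ ∑' i, (f i v) ^ 2)
    (hup : ∀ v : X, ∑' i, (f i v) ^ 2 ≤ B * ‖v‖ ^ 2)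
    (S : X →L[ℝ] StrongDual ℝ X)
    (hS : ∀ v : X, HasSum (fun i => f i v • f i) (S v))
    (Sinv : StrongDual ℝ X →L[ℝ] X)
    (hright : ∀ u' : StrongDual ℝ X, S (Sinv u') = u') :
    ∀ u' : StrongDual ℝ X,
      Summable (fun i => (u' (Sinv (f i))) ^ 2) ∧
      (1 / B) * ‖u'‖ ^ 2 ≤ ∑' i, (u' (Sinv (f i))) ^ 2 ∧
      ∑' i, (u' (Sinv (f i))) ^ 2 ≤ (1 / A) * ‖u'‖ ^ 2 := by
  have hself := hasSum_sq_frameOperator_apply_self hS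
  have hsymm := frameOperator_apply_comm hS
  have hpos : ∀ v, 0 ≤ S v v := fun v => (hself v).nonneg fun i => sq_nonneg _
  intro u'
  set v := Sinv u'
  have hu' : S v = u' := hright u'
  have hdual : ∀ i, u' (Sinv (f i)) = f i v := fun i => by rw [← hu', hsymm, hright]
  simp only [hdual, (hself v).tsum_eq]
  rw [← hu', one_div_mul_eq_div, one_div_mul_eq_div]
  refine ⟨(hself v).summable, ?_, ?_⟩
  · rw [div_le_iff₀ (hA.trans_le hAB), mul_comm]
    exact sq_norm_le_mul_apply_self hsymm hpos (hA.le.trans hAB)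
      (fun w => (hself w).tsum_eq ▸ hup w) v
  · rw [le_div_iff₀ hA, mul_comm]
    exact mul_apply_self_le_sq_norm hA.le (fun w => (hself w).tsum_eq ▸ hlow w) v

/-- For an ℓ²-frame `(f i)` of `X` with bounds `0 < A ≤ B`, frame operator `S`
(bijective with bounded inverse `Sinv`), the canonical dual frame `(Sinv (f i))_{i ∈ I} ⊂ X`
satisfies the frame inequalities for `X'`:
`(1/B)‖u'‖² ≤ ∑' i, (u' (Sinv (f i)))² ≤ (1/A)‖u'‖²` for all `u' ∈ X'`. -/
theorem stmt3 {X : Type*} [NormedAddCommGroup X] [NormedSpace ℝ X] [CompleteSpace X]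
    {I : Type*} [Countable I] (f : I → StrongDual ℝ X) (A B : ℝ)
    (hA : 0 < A) (hAB : A ≤ B)
    (hsum : ∀ v : X, Summable fun i => (f i v) ^ 2)
    (hlow : ∀ v : X, A * ‖v‖ ^ 2 ≤ ∑' i, (f i v) ^ 2)
    (hup : ∀ v : X, ∑' i, (f i v) ^ 2 ≤ B * ‖v‖ ^ 2)
    (S : X →L[ℝ] StrongDual ℝ X)
    (hS : ∀ v : X, HasSum (fun i => f i v • f i) (S v))
    (Sinv : StrongDual ℝ X →L[ℝ] X)
    (hleft : ∀ v : X, Sinv (S v) = v)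
    (hright : ∀ u' : StrongDual ℝ X, S (Sinv u') = u') :
    ∀ u' : StrongDual ℝ X,
      Summable (fun i => (u' (Sinv (f i))) ^ 2) ∧
      (1 / B) * ‖u'‖ ^ 2 ≤ ∑' i, (u' (Sinv (f i))) ^ 2 ∧
      ∑' i, (u' (Sinv (f i))) ^ 2 ≤ (1 / A) * ‖u'‖ ^ 2 :=
  stmt3_general f A B hA hAB hlow hup S hS Sinv hright
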